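/- Let μ* be an upward continuous outer measure on a set X with 0 < μ*(X), and assume 𝔬(X, μ*) = |X| = 𝔡. Then GES(X, μ*) fails. -/

import Mathlib

open MeasureTheory Filter Set

/-- Eventual domination: `α ≤* β` iff `α n ≤ β n` for all but finitely many `n`. -/
def EvDom (α β : ℕ → ℕ) : Prop := ∀ᶠ n in atTop, α n ≤ β n

/-- The dominating number `𝔡`: the least cardinality of a cofinal subset of
`(ℕ → ℕ, ≤*)`. -/
noncomputable def dNum : Cardinal :=
  sInf {c | ∃ S : Set (ℕ → ℕ), (∀ α, ∃ β ∈ S, EvDom α β) ∧ Cardinal.mk S = c}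

/-- `μ` is an upward continuous outer measure. -/
def UpCont {X : Type*} (μ : OuterMeasure X) : Prop :=
  ∀ A : ℕ → Set X,
    Tendsto (fun n => μ (⋃ k < n, A k)) atTop (nhds (μ (⋃ n, A n)))

/-- `GES(X, μ*)`: for every pointwise vanishing sequence `F` of real-valued functions on
`X` and each `M < μ*(X)` there is `A ⊆ X` with `μ*(A) > M` on which `F` converges
uniformly to `0`. -/
def GES {X : Type*} (μ : OuterMeasure X) : Prop :=
  ∀ F : ℕ → X → ℝ, (∀ x, Tendsto (fun n => F n x) atTop (nhds 0)) →
    ∀ M < μ Set.univ, ∃ A : Set X, M < μ A ∧ TendstoUniformlyOn F 0 atTop A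

/-- `𝔬(X, μ*)`: the least cardinality of a subset of `X` of full outer measure. -/
noncomputable def oNum {X : Type*} (μ : OuterMeasure X) : Cardinal :=
  sInf {c | ∃ Y : Set X, μ Y = μ Set.univ ∧ Cardinal.mk Y = c}

/-!
Fix a dominating family `{d_y : y ∈ X}` indexed by `X` itself, and a relation `r` on `X` whose
horizontal and vertical sections are all smaller than `|X| = 𝔡`. Since fewer than `𝔡` functions
never dominate, each `x` gets a function `a x` not dominated by any `d_y` with `¬ r x y`. Then
`{x | a x ≤* δ}` is small for every `δ`: choosing `d_y ≥* δ`, it lies in `{x | r x y}`; as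
`𝔬(X, μ*) = |X|`, these sets are not of full outer measure.

On the other hand the functions `F ⟨k, j⟩ x = 1/(k+1)` if `j ≤ a x k` (and `0` otherwise)
vanish pointwise, and uniform convergence on `A` forces `a` to be pointwise bounded on `A`.
Applying GES along `M_i ↑ μ*(X)` gives sets `A_i` with bounds `β_i`; a single `δ` eventually
dominates every `β_i`, so `{x | a x ≤* δ}` contains every `A_i` and has full outer measure.
-/

open Cardinal

lemma EvDom.trans {α β γ : ℕ → ℕ} (hαβ : EvDom α β) (hβγ : EvDom β γ) : EvDom α γ :=
  EventuallyLE.trans hαβ hβγ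

lemma exists_forall_evDom (β : ℕ → ℕ → ℕ) : ∃ δ : ℕ → ℕ, ∀ i, EvDom (β i) δ := by
  refine ⟨fun n => (Finset.range (n + 1)).sup fun i => β i n, fun i => ?_⟩
  filter_upwards [eventually_ge_atTop i] with n hn
  exact Finset.le_sup (f := fun i => β i n) (Finset.mem_range.2 (Nat.lt_succ_of_le hn))

section DominatingNumber

lemma exists_dominating_mk_eq_dNum :
    ∃ S : Set (ℕ → ℕ), (∀ α, ∃ β ∈ S, EvDom α β) ∧ #S = dNum := by
  show dNum ∈ {c | ∃ S : Set (ℕ → ℕ), (∀ α, ∃ β ∈ S, EvDom α β) ∧ #S = c}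
  exact csInf_mem ⟨_, univ, fun α => ⟨α, trivial, Eventually.of_forall fun _ => le_rfl⟩, rfl⟩

lemma dNum_le_mk {S : Set (ℕ → ℕ)} (hS : ∀ α, ∃ β ∈ S, EvDom α β) : dNum ≤ #S :=
  csInf_le (OrderBot.bddBelow _) ⟨S, hS, rfl⟩

lemma exists_forall_not_evDom_of_mk_lt_dNum {S : Set (ℕ → ℕ)} (hS : #S < dNum) :
    ∃ α, ∀ β ∈ S, ¬ EvDom α β := by
  by_contra! h
  exact (dNum_le_mk h).not_gt hS

lemma Set.Infinite.of_dominating {S : Set (ℕ → ℕ)} (hS : ∀ α, ∃ β ∈ S, EvDom α β) :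
    S.Infinite := by
  intro hfin
  obtain ⟨g, hg⟩ := hfin.bddAbove
  obtain ⟨β, hβS, hβ⟩ := hS (g + 1)
  obtain ⟨n, hn⟩ := hβ.exists
  exact (hn.trans (hg hβS n)).not_gt (Nat.lt_succ_self _)

lemma aleph0_le_dNum : ℵ₀ ≤ dNum := by
  obtain ⟨S, hS, hcard⟩ := exists_dominating_mk_eq_dNum
  rw [← hcard, ← infinite_iff, infinite_coe_iff]
  exact .of_dominating hS

end DominatingNumber

lemma exists_mk_setOf_evDom_lt {X : Type u}
    (hX : lift.{0} #X = lift.{u} dNum) :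
    ∃ a : X → ℕ → ℕ, ∀ δ, #{x | EvDom (a x) δ} < #X := by
  obtain ⟨S, hS, hcard⟩ := exists_dominating_mk_eq_dNum
  obtain ⟨e⟩ := lift_mk_eq'.1 (hcard ▸ hX)
  have : Infinite X := infinite_iff.2 <| aleph0_le_lift.1 (hX ▸ aleph0_le_lift.2 aleph0_le_dNum)
  obtain ⟨r, hr_ver, hr_hor⟩ := exists_rel_mk_fibers_lt X
  have hnot_dom : ∀ x, ∃ α, ∀ y, ¬ r x y → ¬ EvDom α (e y) := by
    intro x
    have himage : #((fun y => (e y : ℕ → ℕ)) '' {y | ¬ r x y}) < dNum := by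
      refine lift_lt.{0, u}.1 (mk_image_le_lift.trans_lt ?_)
      rw [← hX, lift_lt]; exact hr_ver x
    obtain ⟨α, hα⟩ := exists_forall_not_evDom_of_mk_lt_dNum himage
    exact ⟨α, fun y hy => hα _ ⟨y, hy, rfl⟩⟩
  choose a ha using hnot_dom
  refine ⟨a, fun δ => ?_⟩
  obtain ⟨y, hy⟩ : ∃ y, EvDom δ (e y) := by
    obtain ⟨β, hβS, hβ⟩ := hS δ
    exact ⟨e.symm ⟨β, hβS⟩, by simpa using hβ⟩
  refine (mk_le_mk_of_subset fun x hx => ?_).trans_lt (hr_hor y)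
  by_contra hxy
  exact ha x y hxy ((show EvDom (a x) δ from hx).trans hy)

lemma MeasureTheory.OuterMeasure.lt_univ_of_mk_lt_oNum {X : Type*} (μ : OuterMeasure X)
    {s : Set X} (hs : #s < oNum μ) : μ s < μ univ :=
  (μ.mono (subset_univ s)).lt_of_ne fun hfull =>
    (csInf_le (OrderBot.bddBelow _) ⟨s, hfull, rfl⟩ : oNum μ ≤ #s).not_gt hs

section CodingSeq

variable {X : Type*} (a : X → ℕ → ℕ)

noncomputable def codingSeq (n : ℕ) (x : X) : ℝ :=
  if (Nat.unpair n).2 ≤ a x (Nat.unpair n).1 then 1 / ((Nat.unpair n).1 + 1) else 0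

lemma codingSeq_pair (k j : ℕ) (x : X) :
    codingSeq a (Nat.pair k j) x = if j ≤ a x k then 1 / ((k : ℝ) + 1) else 0 := by
  simp only [codingSeq, Nat.unpair_pair]

lemma tendsto_codingSeq (x : X) : Tendsto (fun n => codingSeq a n x) atTop (nhds 0) := by
  refine tendsto_order.2 ⟨fun b hb => Eventually.of_forall fun n => ?_, fun ε hε => ?_⟩
  · unfold codingSeq; split_ifs <;> [exact hb.trans (by positivity); exact hb]
  obtain ⟨K, hK⟩ := exists_nat_one_div_lt hε
  filter_upwards [eventually_gt_atTop ((Finset.range K).sup fun k => Nat.pair k (a x k))]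
    with n hn
  obtain ⟨k, j, rfl⟩ : ∃ k j, n = Nat.pair k j := ⟨_, _, (Nat.pair_unpair n).symm⟩
  rw [codingSeq_pair]
  split_ifs with hj
  · have hKk : K ≤ k := by
      by_contra! hk
      have hpair : Nat.pair k j ≤ Nat.pair k (a x k) :=
        (StrictMono.monotone fun _ _ => Nat.pair_lt_pair_right k) hj
      exact (hpair.trans (Finset.le_sup (f := fun k => Nat.pair k (a x k))
        (Finset.mem_range.2 hk))).not_gt hn
    refine lt_of_le_of_lt ?_ hK
    gcongr
  · exact hε

variable {a}

lemma bddAbove_image_of_tendstoUniformlyOn_codingSeq {A : Set X}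
    (h : TendstoUniformlyOn (codingSeq a) 0 atTop A) : BddAbove (a '' A) := by
  have hN : ∀ k : ℕ, ∃ N, ∀ n ≥ N, ∀ x ∈ A, dist 0 (codingSeq a n x) < 1 / ((k : ℝ) + 1) :=
    fun k => eventually_atTop.1 (Metric.tendstoUniformlyOn_iff.1 h _ (by positivity))
  choose N hN using hN
  refine ⟨N, ?_⟩
  rintro _ ⟨x, hx, rfl⟩ k
  by_contra! hk
  have := hN k _ (Nat.right_le_pair k (N k)) x hx
  rw [codingSeq_pair, if_pos hk.le, dist_zero_left, Real.norm_of_nonneg (by positivity)] at this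
  exact this.false

end CodingSeq

lemma GES.exists_univ_le_setOf_evDom {X : Type*} {μ : OuterMeasure X} (hges : GES μ)
    (hpos : 0 < μ univ) (a : X → ℕ → ℕ) : ∃ δ, μ univ ≤ μ {x | EvDom (a x) δ} := by
  obtain ⟨M, -, hM_lt, hM_tendsto⟩ := exists_seq_strictMono_tendsto' hpos
  choose A hA_gt hA_unif using
    fun i => hges (codingSeq a) (tendsto_codingSeq a) (M i) (hM_lt i).2
  choose β hβ using fun i => bddAbove_image_of_tendstoUniformlyOn_codingSeq (hA_unif i)
  obtain ⟨δ, hδ⟩ := exists_forall_evDom β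
  refine ⟨δ, le_of_tendsto' hM_tendsto fun i => (hA_gt i).le.trans (μ.mono fun x hx => ?_)⟩
  exact EvDom.trans (Eventually.of_forall (hβ i (mem_image_of_mem a hx))) (hδ i)

theorem stmt11_general {X : Type u} (μ : OuterMeasure X)
    (hpos : 0 < μ Set.univ)
    (ho : oNum μ = Cardinal.mk X)
    (hb : Cardinal.lift.{0} (Cardinal.mk X) = Cardinal.lift.{u} dNum) :
    ¬ GES μ := by
  intro hges
  obtain ⟨a, ha⟩ := exists_mk_setOf_evDom_lt hb
  obtain ⟨δ, hδ⟩ := hges.exists_univ_le_setOf_evDom hpos a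
  exact (μ.lt_univ_of_mk_lt_oNum (ho ▸ ha δ)).not_ge hδ

/-- If `0 < μ*(X)` and `𝔬(X, μ*) = |X| = 𝔡`, then `GES(X, μ*)`
fails. -/
theorem stmt11 {X : Type u} (μ : OuterMeasure X) (hμ : UpCont μ)
    (hpos : 0 < μ Set.univ)
    (ho : oNum μ = Cardinal.mk X)
    (hb : Cardinal.lift.{0} (Cardinal.mk X) = Cardinal.lift.{u} dNum) :
    ¬ GES μ :=
  stmt11_general μ hpos ho hb
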